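/- For every positive integer m, every μ > 0, and every α with α_m(μ) < α ≤ 0, the quartic h_{m,μ,α} has no real roots: h_{m,μ,α}(z) ≠ 0 for all z ∈ ℝ. -/
import Mathlib


/-- The characteristic quartic `h_{m,μ,α}(z) = z⁴ − 2m²z² − αz + m⁴ + μm²` of the ODE
`ψ⁗ − 2m²ψ″ − αψ′ + (m⁴ + μm²)ψ = 0`. -/
noncomputable def hQuartic (m : ℕ) (μ α : ℝ) : ℝ → ℝ :=
  fun z => z ^ 4 - 2 * (m : ℝ) ^ 2 * z ^ 2 - α * z + (m : ℝ) ^ 4 + μ * (m : ℝ) ^ 2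

/-- The critical value
`α_m(μ) = −(4m/(3√3)) (√(4m² + 3μ) − 2m) √(m² + m√(4m² + 3μ))`. -/
noncomputable def alphaCrit (m : ℕ) (μ : ℝ) : ℝ :=
  -(4 * (m : ℝ) / (3 * Real.sqrt 3)) * (Real.sqrt (4 * (m : ℝ) ^ 2 + 3 * μ) - 2 * (m : ℝ)) *
    Real.sqrt ((m : ℝ) ^ 2 + (m : ℝ) * Real.sqrt (4 * (m : ℝ) ^ 2 + 3 * μ))

set_option maxHeartbeats 1000000 in
/-- For every positive integer `m`, every `μ > 0`, and every `α` with
`α_m(μ) < α ≤ 0`, the quartic `h_{m,μ,α}` has no real roots. -/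
theorem quartic_no_real_roots_above_alphaCrit (m : ℕ) (hm : 0 < m) (μ : ℝ) (hμ : 0 < μ)
    (α : ℝ) (hα₁ : alphaCrit m μ < α) (hα₂ : α ≤ 0) :
    ∀ z : ℝ, hQuartic m μ α z ≠ 0 := by
  intro z
  have hM : (0:ℝ) < (m:ℝ) := by exact_mod_cast hm
  set M : ℝ := (m:ℝ) with hMdef
  set s : ℝ := Real.sqrt (4 * M ^ 2 + 3 * μ) with hsdef
  have hs2 : s ^ 2 = 4 * M ^ 2 + 3 * μ := Real.sq_sqrt (by positivity)
  have hs0 : 0 < s := Real.sqrt_pos.mpr (by positivity)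
  have hsgt : 2 * M < s := by nlinarith
  set r : ℝ := Real.sqrt ((M ^ 2 + M * s) / 3) with hrdef
  have hr2 : r ^ 2 = (M ^ 2 + M * s) / 3 := Real.sq_sqrt (by positivity)
  have hr0 : 0 < r := Real.sqrt_pos.mpr (by positivity)
  have hsq3 : (Real.sqrt 3) ^ 2 = 3 := Real.sq_sqrt (by norm_num)
  have hsq3pos : (0:ℝ) < Real.sqrt 3 := Real.sqrt_pos.mpr (by norm_num)
  have hsqrt : Real.sqrt (M ^ 2 + M * s) = Real.sqrt 3 * r := by
    rw [hrdef, ← Real.sqrt_mul (by norm_num : (0:ℝ) ≤ 3)]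
    congr 1
    ring
  have hαc : alphaCrit m μ = -(4 * M / 3) * (s - 2 * M) * r := by
    rw [alphaCrit, ← hMdef, ← hsdef, hsqrt]
    field_simp
  suffices h : 0 < hQuartic m μ α z by exact ne_of_gt h
  show 0 < z ^ 4 - 2 * M ^ 2 * z ^ 2 - α * z + M ^ 4 + μ * M ^ 2
  rcases le_or_gt 0 z with hz | hz
  · have hαz : 0 ≤ (-α) * z := mul_nonneg (by linarith) hz
    nlinarith [sq_nonneg (z ^ 2 - M ^ 2), sq_nonneg M, mul_pos hμ (mul_pos hM hM)]
  · -- z < 0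
    have hid : z ^ 4 - 2 * M ^ 2 * z ^ 2 + (4 * M / 3) * (s - 2 * M) * r * z
        + M ^ 4 + μ * M ^ 2
        = (z + r) ^ 2 * (z ^ 2 - 2 * r * z + (M * s - M ^ 2)) := by
      linear_combination (3 * z ^ 2 + 2 * r * z - (M * s - M ^ 2)) * hr2
        - (M ^ 2 / 3) * hs2
    have hb : 0 < M * s - M ^ 2 := by nlinarith
    have hfac : 0 < z ^ 2 - 2 * r * z + (M * s - M ^ 2) := by
      nlinarith [sq_nonneg z, mul_pos hr0 (neg_pos.mpr hz)]
    have h2 : 0 ≤ (z + r) ^ 2 * (z ^ 2 - 2 * r * z + (M * s - M ^ 2)) :=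
      mul_nonneg (sq_nonneg _) hfac.le
    have hααc : -(4 * M / 3) * (s - 2 * M) * r < α := by
      nlinarith [hα₁, hαc]
    have h3 : 0 < (α - (-(4 * M / 3) * (s - 2 * M) * r)) * (-z) :=
      mul_pos (by linarith) (by linarith)
    nlinarith [hid, h2, h3]
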